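/- arXiv:1608.04181 — 3 statements merged into one kernel-verified Lean document; each statement's English description precedes it below -/
import Mathlib

section
/- Let G be a finite group, V a simple F[G]-module over a finite field F with endomorphism field E = End_{F[G]}(V) of cardinality q, and m > 0. Then the number of F[G]-submodules of V^m isomorphic to V equals (q^m − 1)/(q − 1). -/
open LinearMap

section aux

variable {R E V : Type} [Ring R] [AddCommGroup V] [Module R V]
  [Field E] [Module E V] [SMulCommClass R E V]

variable (R V) in
/-- The `R`-linear map `V → V^m` given by a vector of scalars from `E`. -/
def stmt4.fmap {m : ℕ} (v : Fin m → E) : V →ₗ[R] (Fin m → V) where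
  toFun x i := v i • x
  map_add' x y := by funext i; simp
  map_smul' r x := by funext i; simp [smul_comm]

namespace stmt4

lemma fmap_apply {m : ℕ} (v : Fin m → E) (x : V) (i : Fin m) :
    fmap R V v x i = v i • x := rfl

lemma faithful [Nontrivial V] {c : E} (h : ∀ x : V, c • x = 0) : c = 0 := by
  by_contra hc
  obtain ⟨x, hx⟩ := exists_ne (0 : V)
  apply hx
  calc x = c⁻¹ • (c • x) := by rw [smul_smul, inv_mul_cancel₀ hc, one_smul]
  _ = 0 := by rw [h x, smul_zero]

lemma faithful' [Nontrivial V] {c c' : E} (h : ∀ x : V, c • x = c' • x) : c = c' := by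
  have : ∀ x : V, (c - c') • x = 0 := fun x => by rw [sub_smul, h x, sub_self]
  exact sub_eq_zero.mp (faithful this)

lemma fmap_injective [Nontrivial V] {m : ℕ} {v : Fin m → E} (hv : v ≠ 0) :
    Function.Injective (fmap R V v) := by
  obtain ⟨i, hi⟩ : ∃ i, v i ≠ 0 := by
    by_contra h; push_neg at h; exact hv (funext h)
  intro x y hxy
  have h1 := congrFun hxy i
  simp only [fmap_apply] at h1
  have h2 := congrArg ((v i)⁻¹ • ·) h1
  simpa [smul_smul, inv_mul_cancel₀ hi] using h2

/-- If the range of `fmap v` is contained in that of `fmap w` (with `w ≠ 0`), then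
`v` is a scalar multiple of `w`. -/
lemma fmap_prop [Nontrivial V]
    (hE : ∀ φ : Module.End R V, ∃! c : E, ∀ x : V, φ x = c • x)
    {m : ℕ} {v w : Fin m → E} (hw : w ≠ 0)
    (h : range (fmap R V v) ≤ range (fmap R V w)) : ∃ d : E, v = d • w := by
  have hinj := fmap_injective (R := R) (V := V) hw
  set g := fmap R V w with hg
  set f := fmap R V v with hf
  have hmem : ∀ x : V, f x ∈ range g := fun x => h (mem_range_self f x)
  set φ : Module.End R V :=
    (LinearEquiv.ofInjective g hinj).symm.toLinearMap ∘ₗ (f.codRestrict (range g) hmem)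
    with hφ
  obtain ⟨d, hd, -⟩ := hE φ
  have key : ∀ x : V, f x = g (d • x) := by
    intro x
    have h1 : g (φ x) = f x := by
      have : (LinearEquiv.ofInjective g hinj) (φ x) = f.codRestrict (range g) hmem x := by
        simp [hφ]
      have h2 := congrArg (Subtype.val) this
      rwa [LinearEquiv.ofInjective_apply] at h2
    rw [← h1, hd x]
  refine ⟨d, funext fun i => ?_⟩
  have : ∀ x : V, v i • x = (d * w i) • x := by
    intro x
    have h3 := congrFun (key x) i
    simp only [hf, hg, fmap_apply] at h3
    rw [h3, smul_smul, mul_comm]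
  have := faithful' this
  simpa [Pi.smul_apply, smul_eq_mul] using this

lemma fmap_smul_range {m : ℕ} (w : Fin m → E) {d : E} (hd : d ≠ 0) :
    range (fmap R V (d • w)) = range (fmap R V w) := by
  apply le_antisymm
  · rintro _ ⟨x, rfl⟩
    exact ⟨d • x, by funext i; simp [fmap_apply, smul_smul, mul_comm]⟩
  · rintro _ ⟨x, rfl⟩
    refine ⟨d⁻¹ • x, ?_⟩
    funext i
    simp [fmap_apply, smul_smul, Pi.smul_apply, smul_eq_mul]
    rw [mul_comm d (w i), mul_assoc, mul_inv_cancel₀ hd, mul_one]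

end stmt4

end aux

set_option maxHeartbeats 2000000 in
/-- Let `G` be a finite group, `V` a simple `F[G]`-module over a finite
field `F` with endomorphism field `E = End_{F[G]}(V)` of cardinality `q`, and `m > 0`.
Then the number of `F[G]`-submodules of `V^m` isomorphic to `V` is `(q^m − 1)/(q − 1)`. -/
theorem stmt4 (F G V E : Type) [Field F] [Fintype F] [Group G] [Fintype G]
    [AddCommGroup V] [Module (MonoidAlgebra F G) V]
    (hV : IsSimpleModule (MonoidAlgebra F G) V)
    [Field E] [Fintype E] [Module E V] [SMulCommClass (MonoidAlgebra F G) E V]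
    -- `E` is the full endomorphism ring `End_{F[G]}(V)`:
    (hE : ∀ φ : Module.End (MonoidAlgebra F G) V, ∃! c : E, ∀ x : V, φ x = c • x)
    (q : ℕ) (hq : q = Fintype.card E) (m : ℕ) (hm : 0 < m) :
    Nat.card {W : Submodule (MonoidAlgebra F G) (Fin m → V) //
      Nonempty (W ≃ₗ[MonoidAlgebra F G] V)} = (q ^ m - 1) / (q - 1) := by
  classical
  set R := MonoidAlgebra F G
  have : Nontrivial V := IsSimpleModule.nontrivial R V
  set S := {W : Submodule R (Fin m → V) // Nonempty (W ≃ₗ[R] V)} with hS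
  -- the surjection from nonzero vectors of `E^m` to `S`
  set T := {v : Fin m → E // v ≠ 0} with hT
  have hrangeiso : ∀ v : T, Nonempty ((range (stmt4.fmap R V v.1) : Submodule R (Fin m → V)) ≃ₗ[R] V) :=
    fun v => ⟨(LinearEquiv.ofInjective _ (stmt4.fmap_injective v.2)).symm⟩
  set π : T → S := fun v => ⟨range (stmt4.fmap R V v.1), hrangeiso v⟩ with hπ
  have hsurj : Function.Surjective π := by
    rintro ⟨W, ⟨e⟩⟩
    set g : V →ₗ[R] (Fin m → V) := W.subtype ∘ₗ e.symm.toLinearMap with hg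
    have hginj : Function.Injective g := W.injective_subtype.comp e.symm.injective
    choose c hc using fun i => (hE ((LinearMap.proj i) ∘ₗ g)).exists
    have hgc : ∀ x i, g x i = c i • x := fun x i => hc i x
    have hfg : stmt4.fmap R V c = g := by
      apply LinearMap.ext; intro x; funext i
      rw [stmt4.fmap_apply, hgc]
    have hcne : c ≠ 0 := by
      intro h0
      obtain ⟨x, hx⟩ := exists_ne (0 : V)
      apply hx
      apply hginj
      have : g x = 0 := by
        funext i; rw [hgc, h0]; simp
      rw [this, map_zero]
    refine ⟨⟨c, hcne⟩, ?_⟩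
    apply Subtype.ext
    show range (stmt4.fmap R V c) = W
    rw [hfg, hg, LinearMap.range_comp, LinearEquiv.range, Submodule.map_top,
      Submodule.range_subtype]
  -- each fiber of π is in bijection with Eˣ ≃ {d : E // d ≠ 0}
  have hfiber : ∀ s : S, Nat.card {v : T // π v = s} = q - 1 := by
    intro s
    obtain ⟨v₀, rfl⟩ := hsurj s
    have hbij : Function.Bijective (fun d : {d : E // d ≠ 0} =>
        (⟨⟨d.1 • v₀.1, by
          intro h0
          obtain ⟨i, hi⟩ : ∃ i, v₀.1 i ≠ 0 := by
            by_contra h; push_neg at h; exact v₀.2 (funext h)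
          have := congrFun h0 i
          simp only [Pi.smul_apply, smul_eq_mul, Pi.zero_apply, mul_eq_zero] at this
          exact this.elim d.2 hi⟩, by
          apply Subtype.ext
          show range (stmt4.fmap R V (d.1 • v₀.1)) = range (stmt4.fmap R V v₀.1)
          exact stmt4.fmap_smul_range v₀.1 d.2⟩ : {v : T // π v = π v₀})) := by
      constructor
      · rintro ⟨d, hd⟩ ⟨d', hd'⟩ hdd
        have h1 : d • v₀.1 = d' • v₀.1 := congrArg (fun z => z.1.1) hdd
        obtain ⟨i, hi⟩ : ∃ i, v₀.1 i ≠ 0 := by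
          by_contra h; push_neg at h; exact v₀.2 (funext h)
        have := congrFun h1 i
        simp only [Pi.smul_apply, smul_eq_mul] at this
        exact Subtype.ext (mul_right_cancel₀ hi this)
      · rintro ⟨⟨v, hv⟩, hvs⟩
        have heq : range (stmt4.fmap R V v) = range (stmt4.fmap R V v₀.1) :=
          congrArg Subtype.val hvs
        obtain ⟨d, hd⟩ := stmt4.fmap_prop hE v₀.2 (le_of_eq heq)
        have hdne : d ≠ 0 := by
          rintro rfl
          rw [zero_smul] at hd
          exact hv hd
        exact ⟨⟨d, hdne⟩, by apply Subtype.ext; apply Subtype.ext; exact hd.symm⟩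
    rw [← Nat.card_congr (Equiv.ofBijective _ hbij)]
    have : Nat.card {d : E // d ≠ 0} = Fintype.card E - 1 := by
      rw [Nat.card_eq_fintype_card]
      simp [Fintype.card_subtype_compl, Fintype.card_subtype_eq]
    rw [this, hq]
  have hfinS : Finite S := Finite.of_surjective π hsurj
  have hfintS : Fintype S := Fintype.ofFinite S
  -- total count
  have htot : Nat.card T = Nat.card S * (q - 1) := by
    have h1 : Nat.card T = ∑ s : S, Nat.card {v : T // π v = s} := by
      rw [← Nat.card_congr (Equiv.sigmaFiberEquiv π), Nat.card_eq_fintype_card,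
        Fintype.card_sigma]
      simp [Nat.card_eq_fintype_card]
    rw [h1]
    simp only [hfiber]
    rw [Finset.sum_const, Finset.card_univ, Nat.card_eq_fintype_card, smul_eq_mul]
  have hcardT : Nat.card T = q ^ m - 1 := by
    rw [Nat.card_eq_fintype_card]
    have : Fintype.card T = Fintype.card (Fin m → E) - 1 := by
      simp [hT, Fintype.card_subtype_compl, Fintype.card_subtype_eq]
    rw [this, Fintype.card_fun, Fintype.card_fin, hq]
  have key : q ^ m - 1 = Nat.card S * (q - 1) := by rw [← hcardT, htot]
  have hq2 : 1 < q := hq ▸ Fintype.one_lt_card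
  symm
  exact Nat.div_eq_of_eq_mul_left (by omega) key
end

section
/- Let G be a finite group which is a semidirect product T ⋊ Σ with T cyclic of order e coprime to p and Σ cyclic of order f, and let ρ be an irreducible representation of G over an algebraically closed field of characteristic p whose restriction to T is faithful and which is 1-dimensional on the subgroup T ⋊ Σ', where Σ' is the kernel of the action of Σ on T. Then the degree of ρ equals the index [Σ : Σ']. -/
/-- The abelian subgroup `T ⋊ Σ' = T × Σ'` of `G = T ⋊ Σ`, where `Σ' = Ker(φ)` is the
kernel of the action of `Σ` on `T`. -/
def abelianPart {T S : Type*} [Group T] [Group S] (φ : S →* MulAut T) :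
    Subgroup (T ⋊[φ] S) :=
  SemidirectProduct.inl.range ⊔ Subgroup.map SemidirectProduct.inr (MonoidHom.ker φ)

/-!
Let `v` span the stable line. Then `T` acts on `v` through a character `χ`, which is injective:
`ρ` is faithful on `T`, and `ker χ` is stable under `Σ` because every automorphism of a cyclic
group is a power map. Each `ρ(s) v` is a `T`-eigenvector with character `χ ∘ φ(s)⁻¹`; up to a
scalar it depends only on the coset `s Σ'`, and distinct cosets give distinct characters. By
irreducibility these vectors span `V`, so one of them per coset is a basis of `V`.
-/

open SemidirectProduct

namespace Representation

variable {k G V : Type*} [Field k] [AddCommGroup V] [Module k V]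

theorem exists_monoidHom_apply_eq_smul [Monoid G] (ρ : Representation k G V) {v : V}
    (hv : v ≠ 0) (h : ∀ g, ∃ c : k, ρ g v = c • v) :
    ∃ χ : G →* k, ∀ g, ρ g v = χ g • v := by
  choose c hc using h
  refine ⟨{ toFun := c, map_one' := ?_, map_mul' := fun g g' => ?_ }, hc⟩
  · refine smul_left_injective k hv (?_ : c 1 • v = (1 : k) • v)
    rw [← hc, map_one, Module.End.one_apply, one_smul]
  · refine smul_left_injective k hv (?_ : c (g * g') • v = (c g * c g') • v)
    rw [← hc, map_mul, Module.End.mul_apply, hc, map_smul, hc, smul_smul, mul_comm]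

theorem span_range_apply_eq_top [Monoid G] (ρ : Representation k G V) [ρ.IsIrreducible]
    {v : V} (hv : v ≠ 0) : Submodule.span k (Set.range fun g => ρ g v) = ⊤ := by
  let W : Subrepresentation ρ :=
    { toSubmodule := Submodule.span k (Set.range fun g => ρ g v)
      apply_mem_toSubmodule := fun g => by
        refine Submodule.span_le (p := (Submodule.span k _).comap (ρ g)) |>.mpr ?_
        rintro _ ⟨h, rfl⟩
        exact Submodule.subset_span ⟨g * h, by simp only [map_mul, Module.End.mul_apply]⟩ }
  have hvW : v ∈ W := Submodule.subset_span ⟨1, by simp only [map_one, Module.End.one_apply]⟩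
  rcases eq_bot_or_eq_top W with hW | hW
  · exact absurd (hW ▸ hvW : v ∈ (⊥ : Subrepresentation ρ)) hv
  · exact congrArg Subrepresentation.toSubmodule hW

end Representation

theorem MulAut.eq_of_apply_eq_of_forall_mem_zpowers {T : Type*} [Group T] {t₀ : T}
    (ht₀ : ∀ t, t ∈ Subgroup.zpowers t₀) {α β : MulAut T} (h : α t₀ = β t₀) : α = β := by
  ext t
  obtain ⟨n, rfl⟩ := Subgroup.mem_zpowers_iff.mp (ht₀ t)
  rw [map_zpow, map_zpow, h]

namespace SemidirectProduct

variable {T S F V : Type*} [Group T] [Group S] {φ : S →* MulAut T} [Field F] [AddCommGroup V]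
  [Module F V] {ρ : Representation F (T ⋊[φ] S) V} {χ : T →* F} {v : V}

theorem inl_mul_inr (t : T) (s : S) :
    (inl t * inr s : T ⋊[φ] S) = inr s * inl ((φ s)⁻¹ t) := by
  rw [inl_aut_inv, ← mul_assoc, ← mul_assoc, ← map_mul, mul_inv_cancel, map_one, one_mul]

theorem apply_inl_apply_inr (hχ : ∀ t, ρ (inl t) v = χ t • v) (t : T) (s : S) :
    ρ (inl t) (ρ (inr s) v) = χ ((φ s)⁻¹ t) • ρ (inr s) v := by
  rw [← Module.End.mul_apply, ← map_mul, inl_mul_inr, map_mul, Module.End.mul_apply, hχ,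
    map_smul]

theorem span_range_apply_inr_eq_top [ρ.IsIrreducible] (hv : v ≠ 0)
    (hχ : ∀ t, ρ (inl t) v = χ t • v) :
    Submodule.span F (Set.range fun s => ρ (inr s) v) = ⊤ := by
  refine top_unique (ρ.span_range_apply_eq_top hv ▸ Submodule.span_le.mpr ?_)
  rintro _ ⟨g, rfl⟩
  dsimp only
  rw [← inl_left_mul_inr_right g, map_mul, Module.End.mul_apply, apply_inl_apply_inr hχ]
  exact Submodule.smul_mem _ _ (Submodule.subset_span ⟨g.right, rfl⟩)

theorem injective_character_of_faithful [IsCyclic T] [ρ.IsIrreducible]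
    (hfaith : ∀ t : T, ρ (inl t) = 1 → t = 1) (hv : v ≠ 0)
    (hχ : ∀ t, ρ (inl t) v = χ t • v) : Function.Injective χ := by
  refine (injective_iff_map_eq_one χ).mpr fun t ht => hfaith t ?_
  refine LinearMap.ext_on_range (span_range_apply_inr_eq_top hv hχ) fun s => ?_
  obtain ⟨m, hm⟩ := ((φ s)⁻¹ : MulAut T).toMonoidHom.map_cyclic
  have hker : (φ s)⁻¹ t ∈ χ.ker := (hm t).symm ▸ zpow_mem ht m
  rw [apply_inl_apply_inr hχ, hker, one_smul, Module.End.one_apply]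

theorem finrank_eq_index_ker [IsCyclic T] [ρ.IsIrreducible]
    (hfaith : ∀ t : T, ρ (inl t) = 1 → t = 1) (hv : v ≠ 0)
    (hχ : ∀ t, ρ (inl t) v = χ t • v) (hker : ∀ s ∈ φ.ker, ∃ c : F, ρ (inr s) v = c • v) :
    Module.finrank F V = φ.ker.index := by
  obtain ⟨t₀, ht₀⟩ := IsCyclic.exists_generator (α := T)
  let w : S ⧸ φ.ker → V := fun c => ρ (inr c.out) v
  have hspan : ⊤ ≤ Submodule.span F (Set.range w) := by
    rw [← span_range_apply_inr_eq_top hv hχ, Submodule.span_le]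
    rintro _ ⟨s, rfl⟩
    obtain ⟨k, hk⟩ := QuotientGroup.mk_out_eq_mul φ.ker s
    obtain ⟨c, hc⟩ := hker _ (inv_mem k.2)
    have hs : s = (s : S ⧸ φ.ker).out * (k : S)⁻¹ := by rw [hk, mul_inv_cancel_right]
    rw [SetLike.mem_coe]
    dsimp only
    rw [hs, map_mul, map_mul, Module.End.mul_apply, hc, map_smul]
    exact Submodule.smul_mem _ _ (Submodule.subset_span ⟨_, rfl⟩)
  have hμ : Function.Injective fun c : S ⧸ φ.ker => χ ((φ c.out)⁻¹ t₀) := by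
    intro c c' h
    have h' := MulAut.eq_of_apply_eq_of_forall_mem_zpowers ht₀
      (injective_character_of_faithful hfaith hv hχ h)
    apply QuotientGroup.kerLift_injective φ
    rw [← QuotientGroup.out_eq' c, ← QuotientGroup.out_eq' c', QuotientGroup.kerLift_mk,
      QuotientGroup.kerLift_mk, inv_injective h']
  have hli : LinearIndependent F w := by
    refine Module.End.eigenvectors_linearIndependent' (ρ (inl t₀)) _ hμ w fun c => ⟨?_, ?_⟩
    · exact Module.End.mem_eigenspace_iff.mpr (apply_inl_apply_inr hχ t₀ c.out)
    · exact fun h => hv <| by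
        simpa [w, ← Module.End.mul_apply, ← map_mul] using congrArg (ρ (inr c.out⁻¹)) h
  rw [Module.finrank_eq_nat_card_basis (Module.Basis.mk hli hspan), Subgroup.index]

end SemidirectProduct

theorem stmt15_general
    (T S : Type) [Group T] [Group S]
    (hT : IsCyclic T)
    (φ : S →* MulAut T)
    (F : Type) [Field F]
    (V : Type) [AddCommGroup V] [Module F V]
    (ρ : Representation F (T ⋊[φ] S) V)
    (hirr : IsSimpleModule (MonoidAlgebra F (T ⋊[φ] S)) ρ.asModule)
    -- `ρ` restricted to `T` is faithful:
    (hfaith : ∀ t : T, ρ (SemidirectProduct.inl t) = 1 → t = 1)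
    -- `ρ` is 1-dimensional on `T ⋊ Σ'`: some line is stable under `T ⋊ Σ'`:
    (hline : ∃ v : V, v ≠ 0 ∧ ∀ g ∈ abelianPart φ, ∃ c : F, ρ g v = c • v) :
    Module.finrank F V = (MonoidHom.ker φ).index := by
  obtain ⟨v, hv, hstable⟩ := hline
  have := (Representation.irreducible_iff_isSimpleModule_asModule ρ).mpr hirr
  obtain ⟨χ, hχ⟩ := Representation.exists_monoidHom_apply_eq_smul (ρ.comp inl) hv fun t =>
    hstable _ (Subgroup.mem_sup_left ⟨t, rfl⟩)
  exact finrank_eq_index_ker hfaith hv hχ fun s hs =>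
    hstable _ (Subgroup.mem_sup_right ⟨s, hs, rfl⟩)

/-- Let `G = T ⋊ Σ` with `T` cyclic of order `e` coprime to `p` and `Σ`
cyclic of order `f` acting by `σ·t = t^q`, and let `ρ` be an irreducible
representation of `G` over an algebraically closed field of characteristic `p` whose
restriction to `T` is faithful and which is 1-dimensional on the subgroup `T ⋊ Σ'`,
where `Σ'` is the kernel of the action of `Σ` on `T`.  Then `deg ρ = [Σ : Σ']`. -/
theorem stmt15 (p a q e f : ℕ) (hp : p.Prime) (hq : q = p ^ a)
    (hqf : e ∣ q ^ f - 1) (hf : 1 ≤ f) (hco : Nat.Coprime e p)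
    (T S : Type) [Group T] [Fintype T] [Group S] [Fintype S]
    (hT : IsCyclic T) (hTe : Fintype.card T = e)
    (σ : S) (hσ : ∀ x : S, x ∈ Subgroup.zpowers σ) (hSf : Fintype.card S = f)
    (φ : S →* MulAut T) (hφ : ∀ t : T, φ σ t = t ^ q)
    (F : Type) [Field F] [IsAlgClosed F] [CharP F p]
    (V : Type) [AddCommGroup V] [Module F V] [FiniteDimensional F V]
    (ρ : Representation F (T ⋊[φ] S) V)
    (hirr : IsSimpleModule (MonoidAlgebra F (T ⋊[φ] S)) ρ.asModule)
    -- `ρ` restricted to `T` is faithful: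
    (hfaith : ∀ t : T, ρ (SemidirectProduct.inl t) = 1 → t = 1)
    -- `ρ` is 1-dimensional on `T ⋊ Σ'`: some line is stable under `T ⋊ Σ'`:
    (hline : ∃ v : V, v ≠ 0 ∧ ∀ g ∈ abelianPart φ, ∃ c : F, ρ g v = c • v) :
    Module.finrank F V = (MonoidHom.ker φ).index :=
  stmt15_general T S hT φ F V ρ hirr hfaith hline
end

section
/- Let T be cyclic of order e, Σ = ⟨σ⟩ cyclic of order f acting on T by σ·t = t^q with q a power of the prime p and q^f ≡ 1 (mod e), and G = T ⋊ Σ. If ρ is an irreducible representation of G over a field of characteristic p whose restriction to T is faithful, and r is the order of p modulo e, then r divides the degree of ρ times [F':F_p] for the field of definition F' of ρ; in particular if ρ is defined over F_p then r divides deg(ρ). -/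
/-!
Let `x` be the image of a generator of `T`. Since `T` is normal and cyclic, every conjugate of `x`
is a power of `x`, so the kernel of `ρ x ^ m - 1` is a subrepresentation. By irreducibility and
faithfulness it is zero for every proper divisor `m` of `e`, and splitting
`X ^ e - 1 = (∏_{m ∣ e, m < e} Φ_m) Φ_e` shows that `ρ x` is a root of `Φ_e`. Hence every
irreducible factor of the characteristic polynomial of `ρ x` divides `Φ_e`, and over a field with
`p ^ d` elements all such factors have degree the order `s` of `p ^ d` modulo `e`. So `s` divides
`deg ρ`, and `r` divides `s * d`.
-/

open Polynomial

theorem Polynomial.aeval_cyclotomic_eq_zero_of_isLeftRegular {R A : Type*} [CommRing R] [Ring A]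
    [Algebra R A] {n : ℕ} (hn : 0 < n) {a : A} (ha : a ^ n = 1)
    (h : ∀ m ∈ n.properDivisors, IsLeftRegular (a ^ m - 1)) :
    aeval a (cyclotomic n R) = 0 := by
  have hreg : IsLeftRegular (aeval a (∏ m ∈ n.properDivisors, cyclotomic m R)) := by
    refine Finset.prod_induction _ (fun q => IsLeftRegular (aeval a q))
      (fun q₁ q₂ h₁ h₂ => by rw [map_mul]; exact h₁.mul h₂)
      (by simp [isRegular_one.left]) ?_
    intro m hm
    obtain ⟨c, hc⟩ := cyclotomic.dvd_X_pow_sub_one m R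
    have hm' := h m hm
    rw [show a ^ m - 1 = aeval a c * aeval a (cyclotomic m R) by
      rw [← map_mul, mul_comm, ← hc]; simp] at hm'
    exact hm'.of_mul
  have hprod := prod_cyclotomic_eq_X_pow_sub_one hn R
  rw [← Nat.cons_self_properDivisors hn.ne', Finset.prod_cons, mul_comm] at hprod
  refine hreg ?_
  dsimp only
  rw [mul_zero, ← map_mul, hprod]
  simp [ha]

theorem Polynomial.dvd_natDegree_of_forall_irreducible_dvd {K : Type*} [Field K] {s : ℕ}
    (χ : K[X]) (h : ∀ g : K[X], Irreducible g → g ∣ χ → s ∣ g.natDegree) :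
    s ∣ χ.natDegree := by
  induction χ using WfDvdMonoid.induction_on_irreducible with
  | zero => simp
  | unit u hu => simp [natDegree_eq_zero_of_isUnit hu]
  | mul a g ha hg ih =>
    rw [natDegree_mul hg.ne_zero ha]
    exact dvd_add (h g hg (dvd_mul_right g a))
      (ih fun g' hg' hg'a => h g' hg' (hg'a.mul_left g))

theorem LinearMap.dvd_of_irreducible_dvd_charpoly {K V : Type*} [Field K] [AddCommGroup V]
    [Module K V] [FiniteDimensional K V] (f : Module.End K V) {g P : K[X]} (hg : Irreducible g)
    (hgf : g ∣ f.charpoly) (hP : aeval f P = 0) : g ∣ P := by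
  have : Fact (Irreducible g) := ⟨hg⟩
  have : Nonempty (Fin (Module.finrank K V)) := by
    refine Fin.pos_iff_nonempty.mp (Nat.pos_of_ne_zero fun h0 => hg.not_isUnit ?_)
    rw [f.charpoly_monic.natDegree_eq_zero.mp (h0 ▸ f.charpoly_natDegree)] at hgf
    exact isUnit_of_dvd_one hgf
  let L := AdjoinRoot g
  let A := (LinearMap.toMatrixAlgEquiv (Module.finBasis K V) f).map (algebraMap K L)
  -- Over `L = K[X]/(g)` the root of `g` is an eigenvalue of `f`, hence a root of `P`.
  have hroot : AdjoinRoot.root g ∈ spectrum L A := by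
    refine Matrix.mem_spectrum_of_isRoot_charpoly ?_
    rw [Matrix.charpoly_map, show (LinearMap.toMatrixAlgEquiv (Module.finBasis K V) f).charpoly
      = f.charpoly from f.charpoly_toMatrix _, IsRoot, eval_map_algebraMap, AdjoinRoot.aeval_eq,
      AdjoinRoot.mk_eq_zero]
    exact hgf
  have hA : aeval A P = 0 := by
    rw [show A = (Algebra.ofId K L).mapMatrix (LinearMap.toMatrixAlgEquiv (Module.finBasis K V) f)
      from rfl, aeval_algHom_apply, aeval_algEquiv]
    simp [hP]
  have := spectrum.subset_polynomial_aeval A (P.map (algebraMap K L)) ⟨_, hroot, rfl⟩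
  dsimp only at this
  rwa [aeval_map_algebraMap, hA, spectrum.zero_eq, Set.mem_singleton_iff, eval_map_algebraMap,
    AdjoinRoot.aeval_eq, AdjoinRoot.mk_eq_zero] at this

theorem Module.End.orderOf_dvd_finrank_of_aeval_cyclotomic_eq_zero {K V : Type*} [Field K]
    [Fintype K] [AddCommGroup V] [Module K V] [FiniteDimensional K V] {p k n : ℕ}
    [Fact p.Prime] (hK : Fintype.card K = p ^ k) (hn : p.Coprime n) {f : Module.End K V}
    (hf : aeval f (cyclotomic n K) = 0) :
    orderOf (ZMod.unitOfCoprime _ (hn.pow_left k)) ∣ Module.finrank K V := by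
  rw [← f.charpoly_natDegree]
  refine dvd_natDegree_of_forall_irreducible_dvd _ fun g hg hgf => ?_
  rw [natDegree_of_dvd_cyclotomic_of_irreducible hK hn
    (f.dvd_of_irreducible_dvd_charpoly hg hgf hf) hg]

namespace Representation

variable {k G V : Type*} [Field k] [Group G] [AddCommGroup V] [Module k V]
  (ρ : Representation k G V) [ρ.IsIrreducible]

theorem injective_sub_one_or_eq_one {x : G} (hx : ∀ g : G, ∃ n : ℕ, g * x * g⁻¹ = x ^ n) :
    Function.Injective (ρ x - 1 : Module.End k V) ∨ ρ x = 1 := by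
  let W : Subrepresentation ρ :=
    ⟨LinearMap.ker (ρ x - 1), fun g v hv => by
      obtain ⟨n, hn⟩ := hx g⁻¹
      rw [LinearMap.mem_ker, LinearMap.sub_apply, Module.End.one_apply, sub_eq_zero] at hv ⊢
      have hxg : x * g = g * x ^ n := by rw [← hn]; group
      calc ρ x (ρ g v) = ρ g ((ρ x ^ n) v) := by
            rw [← Module.End.mul_apply, ← map_mul, hxg, map_mul, map_pow, Module.End.mul_apply]
        _ = ρ g v := by rw [Module.End.pow_apply, Function.iterate_fixed hv]⟩
  rcases eq_bot_or_eq_top W with h | h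
  · left
    rw [← LinearMap.ker_eq_bot]
    exact congrArg Subrepresentation.toSubmodule h
  · right
    rw [← sub_eq_zero, ← LinearMap.ker_eq_top]
    exact congrArg Subrepresentation.toSubmodule h

theorem aeval_cyclotomic_orderOf_eq_zero {x : G} (hx : IsOfFinOrder x)
    (hconj : ∀ g : G, ∃ n : ℕ, g * x * g⁻¹ = x ^ n)
    (hfaith : ∀ n : ℕ, ρ (x ^ n) = 1 → x ^ n = 1) :
    aeval (ρ x) (cyclotomic (orderOf x) k) = 0 := by
  refine aeval_cyclotomic_eq_zero_of_isLeftRegular hx.orderOf_pos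
    (by rw [← map_pow, pow_orderOf_eq_one, map_one]) fun m hm => ?_
  have hconj_pow (g : G) : ∃ n : ℕ, g * x ^ m * g⁻¹ = (x ^ m) ^ n := by
    obtain ⟨n, hn⟩ := hconj g
    exact ⟨n, by rw [← conj_pow, hn, ← pow_mul, ← pow_mul, mul_comm]⟩
  rcases injective_sub_one_or_eq_one ρ hconj_pow with hinj | h1
  · rw [← map_pow]
    exact fun a b hab => LinearMap.ext fun v => hinj (LinearMap.congr_fun hab v)
  · have hm' := Nat.mem_properDivisors.mp hm
    exact absurd (orderOf_dvd_of_pow_eq_one (hfaith m h1))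
      (Nat.not_dvd_of_pos_of_lt (Nat.pos_of_mem_properDivisors hm) hm'.2)

end Representation

theorem SemidirectProduct.exists_conj_inl_eq_pow {N G : Type*} [Group N] [Group G] [Finite N]
    {φ : G →* MulAut N} {t : N} (ht : ∀ n : N, n ∈ Subgroup.zpowers t) (g : N ⋊[φ] G) :
    ∃ k : ℕ, g * inl t * g⁻¹ = inl t ^ k := by
  obtain ⟨m, hm⟩ : g * inl t * g⁻¹ ∈ (inl : N →* N ⋊[φ] G).range := by
    rw [range_inl_eq_ker_rightHom]
    simp
  obtain ⟨k, rfl⟩ := mem_powers_iff_mem_zpowers.mpr (ht m)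
  exact ⟨k, by rw [← hm, map_pow]⟩

theorem stmt17_general (p e : ℕ) (hp : p.Prime) (hco : Nat.Coprime e p)
    (T S : Type) [Group T] [Fintype T] [Group S]
    (hT : IsCyclic T) (hTe : Fintype.card T = e)
    (φ : S →* MulAut T)
    (F' : Type) [Field F'] [Fintype F'] [Algebra (ZMod p) F']
    (V : Type) [AddCommGroup V] [Module F' V] [FiniteDimensional F' V]
    (ρ : Representation F' (T ⋊[φ] S) V)
    (hirr : IsSimpleModule (MonoidAlgebra F' (T ⋊[φ] S)) ρ.asModule)
    -- `ρ` restricted to `T` is faithful: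
    (hfaith : ∀ t : T, ρ (SemidirectProduct.inl t) = 1 → t = 1)
    (r : ℕ) (hr : r = orderOf ((p : ZMod e))) :
    r ∣ Module.finrank F' V * Module.finrank (ZMod p) F' ∧
    (Module.finrank (ZMod p) F' = 1 → r ∣ Module.finrank F' V) := by
  have : Fact p.Prime := ⟨hp⟩
  have : ρ.IsIrreducible := (Representation.irreducible_iff_isSimpleModule_asModule ρ).mpr hirr
  obtain ⟨t, ht⟩ := hT.exists_generator
  have hx : orderOf (SemidirectProduct.inl t : T ⋊[φ] S) = e := by
    rw [orderOf_injective _ SemidirectProduct.inl_injective,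
      orderOf_eq_card_of_forall_mem_zpowers ht, Nat.card_eq_fintype_card, hTe]
  have hΦ := Representation.aeval_cyclotomic_orderOf_eq_zero ρ
    (orderOf_pos_iff.mp (by rw [hx, ← hTe]; exact Fintype.card_pos))
    (SemidirectProduct.exists_conj_inl_eq_pow ht)
    fun n h => by rw [← map_pow] at h ⊢; rw [hfaith _ h, map_one]
  rw [hx] at hΦ
  set d := Module.finrank (ZMod p) F'
  have hcard : Fintype.card F' = p ^ d := by
    rw [Module.card_eq_pow_finrank (K := ZMod p), ZMod.card]
  have hs := Module.End.orderOf_dvd_finrank_of_aeval_cyclotomic_eq_zero hcard hco.symm hΦ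
  have hpow : ZMod.unitOfCoprime _ (hco.symm.pow_left d) = ZMod.unitOfCoprime p hco.symm ^ d :=
    Units.ext (by simp)
  have hrd : r ∣ Module.finrank F' V * d := by
    rw [hr, ← ZMod.coe_unitOfCoprime p hco.symm, orderOf_units]
    rw [hpow] at hs
    exact orderOf_dvd_of_pow_eq_one (by rw [mul_comm, pow_mul, orderOf_dvd_iff_pow_eq_one.mp hs])
  exact ⟨hrd, fun hd => by simpa [hd] using hrd⟩

/-- Let `T` be cyclic of order `e`, `Σ = ⟨σ⟩` cyclic of order `f` acting
on `T` by `σ·t = t^q` with `q` a power of the prime `p` and `q^f ≡ 1 (mod e)`, and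
`G = T ⋊ Σ`.  If `ρ` is an irreducible representation of `G` over a field `F'` of
characteristic `p` whose restriction to `T` is faithful, and `r` is the order of `p`
modulo `e`, then `r` divides `deg(ρ) · [F' : F_p]`; in particular if `F' = F_p` then
`r ∣ deg ρ`. -/
theorem stmt17 (p a q e f : ℕ) (hp : p.Prime) (hq : q = p ^ a)
    (hqf : e ∣ q ^ f - 1) (hf : 1 ≤ f) (hco : Nat.Coprime e p)
    (T S : Type) [Group T] [Fintype T] [Group S] [Fintype S]
    (hT : IsCyclic T) (hTe : Fintype.card T = e)
    (σ : S) (hσ : ∀ x : S, x ∈ Subgroup.zpowers σ) (hSf : Fintype.card S = f)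
    (φ : S →* MulAut T) (hφ : ∀ t : T, φ σ t = t ^ q)
    (F' : Type) [Field F'] [Fintype F'] [CharP F' p] [Algebra (ZMod p) F']
    (V : Type) [AddCommGroup V] [Module F' V] [FiniteDimensional F' V]
    (ρ : Representation F' (T ⋊[φ] S) V)
    (hirr : IsSimpleModule (MonoidAlgebra F' (T ⋊[φ] S)) ρ.asModule)
    -- `ρ` restricted to `T` is faithful:
    (hfaith : ∀ t : T, ρ (SemidirectProduct.inl t) = 1 → t = 1)
    (r : ℕ) (hr : r = orderOf ((p : ZMod e))) :
    r ∣ Module.finrank F' V * Module.finrank (ZMod p) F' ∧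
    (Module.finrank (ZMod p) F' = 1 → r ∣ Module.finrank F' V) :=
  stmt17_general p e hp hco T S hT hTe φ F' V ρ hirr hfaith r hr
end
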